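/- arXiv:2501.07829 — 5 statements merged into one kernel-verified Lean document; each statement's English description precedes it below -/
import Mathlib

section
/- If P is a homogeneous prime ideal in a polynomial ring S = k[x_1,...,x_n] with a monomial order, and f ∈ P is a nonzero homogeneous polynomial whose initial monomial in(f) is a minimal generator of the initial ideal in(P), then f is irreducible. -/
open MvPolynomial Finsupp Module

namespace Paper

variable {k : Type*} [Field k] {n : ℕ}

/-- `J` is a monomial ideal: generated by a set of monomials. -/
def IsMonomialIdeal (J : Ideal (MvPolynomial (Fin n) k)) : Prop :=
  ∃ G : Set (Fin n →₀ ℕ),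
    J = Ideal.span ((fun d => (monomial d (1:k) : MvPolynomial (Fin n) k)) '' G)

/-- The Borel-type condition: for `i < j` and a monomial `x^d ∈ J` with `x_j ∣ x^d`,
some `x_i^s · x^d / x_j` lies in `J`. -/
def BorelCond (J : Ideal (MvPolynomial (Fin n) k)) : Prop :=
  ∀ i j : Fin n, i < j → ∀ d : Fin n →₀ ℕ,
    (monomial d (1:k) : MvPolynomial (Fin n) k) ∈ J → d j ≠ 0 →
    ∃ s : ℕ,
      (monomial (d + Finsupp.single i s - Finsupp.single j 1) (1:k) :
        MvPolynomial (Fin n) k) ∈ J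

/-- `J` is a monomial ideal of Borel type. -/
def IsBorelType (J : Ideal (MvPolynomial (Fin n) k)) : Prop :=
  IsMonomialIdeal J ∧ BorelCond J

/-- The saturation `J : I^∞`. -/
noncomputable def sat (J I : Ideal (MvPolynomial (Fin n) k)) : Ideal (MvPolynomial (Fin n) k) :=
  ⨆ m : ℕ, Submodule.colon J ((I ^ m) : Ideal (MvPolynomial (Fin n) k))

/-- The product of the variables with (0-based) index `≥ r`, i.e. `x_{r+1} ⋯ x_n`. -/
noncomputable def tailProd (k : Type*) [Field k] (n r : ℕ) : MvPolynomial (Fin n) k :=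
  ∏ i ∈ Finset.univ.filter (fun i : Fin n => r ≤ (i : ℕ)), X i

/-- `Φ_r(J) = J : (x_{r+1} ⋯ x_n)^∞`. -/
noncomputable def Phi (r : ℕ) (J : Ideal (MvPolynomial (Fin n) k)) :
    Ideal (MvPolynomial (Fin n) k) :=
  sat J (Ideal.span {tailProd k n r})

/-- The projection `Π_r : k[x_1,…,x_n] → k[x_1,…,x_r]` sending `x_{r+1},…,x_n` to `0`. -/
noncomputable def projDown (k : Type*) [Field k] (n r : ℕ) :
    MvPolynomial (Fin n) k →ₐ[k] MvPolynomial (Fin r) k :=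
  aeval (fun i : Fin n => if h : (i : ℕ) < r then X ⟨i, h⟩ else 0)

/-- `Π_r(J)`, the image ideal of `J` in `k[x_1,…,x_r]`. -/
noncomputable def PiIdeal (r : ℕ) (J : Ideal (MvPolynomial (Fin n) k)) :
    Ideal (MvPolynomial (Fin r) k) :=
  J.map (projDown k n r).toRingHom

/-- The exponent `d` is a minimal generator of the monomial ideal `J`. -/
def IsMinGen (J : Ideal (MvPolynomial (Fin n) k)) (d : Fin n →₀ ℕ) : Prop :=
  (monomial d (1:k) : MvPolynomial (Fin n) k) ∈ J ∧
    ∀ d' : Fin n →₀ ℕ, d' ≤ d →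
      (monomial d' (1:k) : MvPolynomial (Fin n) k) ∈ J → d' = d

/-- The leading exponent of a polynomial with respect to a monomial order. -/
noncomputable def leadExp (m : MonomialOrder (Fin n)) (f : MvPolynomial (Fin n) k) :
    Fin n →₀ ℕ :=
  m.toSyn.symm (f.support.sup fun d => m.toSyn d)

/-- The initial ideal of `P` with respect to the monomial order `m`. -/
noncomputable def initialIdeal (m : MonomialOrder (Fin n)) (P : Ideal (MvPolynomial (Fin n) k)) :
    Ideal (MvPolynomial (Fin n) k) :=
  Ideal.span {g | ∃ f ∈ P, f ≠ 0 ∧ g = (monomial (leadExp m f) (1:k) : MvPolynomial (Fin n) k)}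

/-- A homogeneous ideal: closed under taking homogeneous components. -/
def IsHomogIdeal (P : Ideal (MvPolynomial (Fin n) k)) : Prop :=
  ∀ f ∈ P, ∀ i : ℕ, homogeneousComponent i f ∈ P

/-- The ideal generated by the variables `x_1, …, x_{i+1}` (0-based indices `≤ i`). -/
noncomputable def varIdealLe (k : Type*) [Field k] {n : ℕ} (i : Fin n) :
    Ideal (MvPolynomial (Fin n) k) :=
  Ideal.span ((fun j : Fin n => (X j : MvPolynomial (Fin n) k)) '' {j | j ≤ i})

/-- The Hilbert series of `S/I` as a power series with integer coefficients. -/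
noncomputable def hilb {N : ℕ} (I : Ideal (MvPolynomial (Fin N) k)) : PowerSeries ℤ :=
  PowerSeries.mk fun i =>
    (Module.finrank k (Submodule.map (Ideal.Quotient.mkₐ k I).toLinearMap
      (homogeneousSubmodule (Fin N) k i)) : ℤ)

/-- The `i`-th Hilbert coefficient read off from the numerator polynomial `q`:
the coefficient of `(t-1)^i` in `q`. -/
noncomputable def hc (q : Polynomial ℤ) (i : ℕ) : ℤ :=
  (Polynomial.taylor 1 q).coeff i

/-- The Krull dimension of the quotient ring `S/I`. -/
noncomputable def qdim {N : ℕ} (I : Ideal (MvPolynomial (Fin N) k)) : WithBot (WithTop ℕ) :=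
  ringKrullDim (MvPolynomial (Fin N) k ⧸ I)

/-- The embedding `k[x_1,…,x_r] → k[x_1,…,x_n]`. -/
noncomputable def inclUp (k : Type*) [Field k] {r n : ℕ} (h : r ≤ n) :
    MvPolynomial (Fin r) k →ₐ[k] MvPolynomial (Fin n) k :=
  rename (Fin.castLE h)

/-- The embedding of variables for the tail subring `k[x_{r+1},…,x_n]`. -/
def tailEmb (n r : ℕ) (h : r ≤ n) : Fin (n - r) → Fin n :=
  fun j => ⟨r + j.1, by omega⟩

/-- The inclusion `k[x_{r+1},…,x_n] → k[x_1,…,x_n]` as a ring hom. -/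
noncomputable def tailIncl (k : Type*) [Field k] {n : ℕ} (r : ℕ) (h : r ≤ n) :
    MvPolynomial (Fin (n - r)) k →+* MvPolynomial (Fin n) k :=
  (rename (tailEmb n r h)).toRingHom

/-- `J₁ = (J ∩ k[x_1,…,x_r])S`: the ideal generated by the monomials of `J`
lying in `k[x_1,…,x_r]`. -/
noncomputable def Jone (r : ℕ) (J : Ideal (MvPolynomial (Fin n) k)) :
    Ideal (MvPolynomial (Fin n) k) :=
  Ideal.span {g | ∃ d : Fin n →₀ ℕ, (∀ i : Fin n, r ≤ (i : ℕ) → d i = 0) ∧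
    (monomial d (1:k) : MvPolynomial (Fin n) k) ∈ J ∧
    g = (monomial d (1:k) : MvPolynomial (Fin n) k)}

/-- The quotient module `J₂/J₁` for ideals `J₁ ≤ J₂`. -/
abbrev quotMod (J₁ J₂ : Ideal (MvPolynomial (Fin n) k)) :=
  (J₂ : Submodule (MvPolynomial (Fin n) k) (MvPolynomial (Fin n) k)) ⧸
    (Submodule.comap
      (J₂ : Submodule (MvPolynomial (Fin n) k) (MvPolynomial (Fin n) k)).subtype
      (J₁ : Submodule (MvPolynomial (Fin n) k) (MvPolynomial (Fin n) k)))

/-- `J₂/J₁` as a module over `k[x_{r+1},…,x_n]`. -/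
noncomputable def quotModTail (r : ℕ) (h : r ≤ n) (J₁ J₂ : Ideal (MvPolynomial (Fin n) k)) :
    Module (MvPolynomial (Fin (n - r)) k) (quotMod J₁ J₂) :=
  Module.compHom _ (tailIncl k r h)

/-- The degrevlex property of a monomial order: compare total degrees first, and break
ties by the *last* variable in which the exponents differ, where *larger* exponent
means *smaller* monomial. -/
def IsDegRevLex (m : MonomialOrder (Fin n)) : Prop :=
  ∀ a b : Fin n →₀ ℕ, (m.toSyn a < m.toSyn b) ↔
    ((a.sum fun _ e => e) < (b.sum fun _ e => e) ∨
      ((a.sum fun _ e => e) = (b.sum fun _ e => e) ∧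
        ∃ i : Fin n, b i < a i ∧ ∀ j : Fin n, i < j → a j = b j))

end Paper

open Paper MvPolynomial

/-! Leading exponents add under multiplication. If `f = a * b` with `a ∈ P`, then `in(a)` lies in
`in(P)` and divides `in(f) = in(a) * in(b)`, so minimality of `in(f)` forces `in(b) = 1`, that is,
`b` is a nonzero constant. -/

theorem MonomialOrder.isUnit_of_degree_eq_zero {σ K : Type*} [Field K] (m : MonomialOrder σ)
    {f : MvPolynomial σ K} (hf : f ≠ 0) (h : m.degree f = 0) : IsUnit f := by
  rw [m.degree_eq_zero_iff.mp h]
  exact (m.isUnit_leadingCoeff.mpr hf).map C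

namespace Paper

variable {k : Type*} [Field k] {n : ℕ} (m : MonomialOrder (Fin n))

theorem leadExp_eq_degree (f : MvPolynomial (Fin n) k) : leadExp m f = m.degree f := rfl

theorem monomial_degree_mem_initialIdeal {P : Ideal (MvPolynomial (Fin n) k)}
    {g : MvPolynomial (Fin n) k} (hg : g ∈ P) (hg0 : g ≠ 0) :
    monomial (m.degree g) (1 : k) ∈ initialIdeal m P :=
  Ideal.subset_span ⟨g, hg, hg0, rfl⟩

theorem isUnit_right_of_isMinGen_of_left_mem {P : Ideal (MvPolynomial (Fin n) k)}
    {a b : MvPolynomial (Fin n) k} (ha : a ∈ P) (ha0 : a ≠ 0) (hb0 : b ≠ 0)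
    (hmin : IsMinGen (initialIdeal m P) (leadExp m (a * b))) : IsUnit b := by
  rw [leadExp_eq_degree, m.degree_mul ha0 hb0] at hmin
  have hdeg : m.degree a = m.degree a + m.degree b :=
    hmin.2 (m.degree a) le_self_add (monomial_degree_mem_initialIdeal m ha ha0)
  exact m.isUnit_of_degree_eq_zero hb0 (left_eq_add.mp hdeg)

end Paper

theorem stmt0_general {k : Type*} [Field k] {n : ℕ} (m : MonomialOrder (Fin n))
    (P : Ideal (MvPolynomial (Fin n) k)) (hP : P.IsPrime)
    (f : MvPolynomial (Fin n) k) (hfP : f ∈ P) (hf0 : f ≠ 0)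
    (hmin : IsMinGen (initialIdeal m P) (leadExp m f)) :
    Irreducible f := by
  refine ⟨fun hu => hP.ne_top (Ideal.eq_top_of_isUnit_mem P hfP hu), fun a b hab => ?_⟩
  subst hab
  have ha0 : a ≠ 0 := left_ne_zero_of_mul hf0
  have hb0 : b ≠ 0 := right_ne_zero_of_mul hf0
  rcases hP.mem_or_mem hfP with haP | hbP
  · exact Or.inr (isUnit_right_of_isMinGen_of_left_mem m haP ha0 hb0 hmin)
  · rw [mul_comm] at hmin
    exact Or.inl (isUnit_right_of_isMinGen_of_left_mem m hbP hb0 ha0 hmin)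

/-- If `P` is a homogeneous prime ideal and `f ∈ P` is a nonzero
homogeneous polynomial whose initial monomial is a minimal generator of the initial
ideal `in(P)`, then `f` is irreducible. -/
theorem stmt0 {k : Type*} [Field k] {n : ℕ} (m : MonomialOrder (Fin n))
    (P : Ideal (MvPolynomial (Fin n) k)) (hP : P.IsPrime) (hPhom : IsHomogIdeal P)
    (f : MvPolynomial (Fin n) k) (hfP : f ∈ P) (hf0 : f ≠ 0)
    (D : ℕ) (hfhom : f.IsHomogeneous D)
    (hmin : IsMinGen (initialIdeal m P) (leadExp m f)) :
    Irreducible f :=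
  stmt0_general m P hP f hfP hf0 hmin
end

section
/- A monomial ideal J in k[x_1,...,x_n] is of Borel type if and only if for every i, the saturation J : (x_1,...,x_i)^∞ equals J : x_i^∞. -/
open MvPolynomial Finsupp Module

open Paper MvPolynomial

/-!
As `S` is Noetherian, `f ∈ J : I^∞` iff `I ⊆ √(J : f)`. Hence
`J : (x_1,…,x_i)^∞ = J : x_i^∞` for all `i` says exactly that `x_i ∈ √(J : f)` forces
`x_j ∈ √(J : f)` for `j < i`. For a monomial ideal this may be tested on the monomials `x^d`
of `f`, where `x_j ∈ √(J : x^d)` means `x^d x_j^s ∈ J` for some `s`; the implication is then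
the Borel condition, iterated to trade the factors `x_i` of `x^d x_i^m` one at a time for
powers of `x_j`.
-/

namespace Paper

variable {k : Type*} [Field k] {n : ℕ}

lemma mem_sat_iff_exists_mem_colon {J I : Ideal (MvPolynomial (Fin n) k)}
    {f : MvPolynomial (Fin n) k} :
    f ∈ sat J I ↔
      ∃ m : ℕ, f ∈ J.colon ((I ^ m : Ideal (MvPolynomial (Fin n) k)) : Set _) :=
  Submodule.mem_iSup_of_directed _ <| Monotone.directed_le fun _ _ hab =>
    Submodule.colon_mono le_rfl (Ideal.pow_le_pow_right hab)

lemma mem_sat_iff_le_radical_colon {J I : Ideal (MvPolynomial (Fin n) k)}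
    {f : MvPolynomial (Fin n) k} :
    f ∈ sat J I ↔ I ≤ (J.colon {f}).radical := by
  have hcolon (m : ℕ) : f ∈ J.colon ((I ^ m : Ideal (MvPolynomial (Fin n) k)) : Set _) ↔
      I ^ m ≤ J.colon {f} := by
    simp only [Submodule.mem_colon, SetLike.le_def, smul_eq_mul, mul_comm f, SetLike.mem_coe,
      Set.mem_singleton_iff, forall_eq]
  simp_rw [mem_sat_iff_exists_mem_colon, hcolon]
  exact ⟨fun ⟨m, hm⟩ x hx => ⟨m, hm (Ideal.pow_mem_pow hx m)⟩,
    fun h => Ideal.exists_pow_le_of_le_radical_of_fg h (IsNoetherian.noetherian I)⟩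

lemma mem_sat_span_singleton_iff {J : Ideal (MvPolynomial (Fin n) k)}
    {f g : MvPolynomial (Fin n) k} :
    f ∈ sat J (Ideal.span {g}) ↔ g ∈ (J.colon {f}).radical := by
  rw [mem_sat_iff_le_radical_colon, Ideal.span_singleton_le_iff_mem]

lemma mem_sat_varIdealLe_iff {J : Ideal (MvPolynomial (Fin n) k)}
    {f : MvPolynomial (Fin n) k} {i : Fin n} :
    f ∈ sat J (varIdealLe k i) ↔ ∀ j ≤ i, X j ∈ (J.colon {f}).radical := by
  rw [mem_sat_iff_le_radical_colon, varIdealLe, Ideal.span_le, Set.image_subset_iff]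
  rfl

lemma X_mem_radical_colon_monomial_iff {J : Ideal (MvPolynomial (Fin n) k)}
    {d : Fin n →₀ ℕ} {j : Fin n} :
    X j ∈ (J.colon {monomial d (1 : k)}).radical ↔
      ∃ s : ℕ, monomial (d + single j s) (1 : k) ∈ J := by
  simp only [Ideal.mem_radical_iff, Submodule.mem_colon_singleton, smul_eq_mul,
    X_pow_eq_monomial, monomial_mul, one_mul, add_comm d]

lemma BorelCond.exists_monomial_add_single_mem {J : Ideal (MvPolynomial (Fin n) k)}
    (hB : BorelCond J) {i j : Fin n} (hij : i < j) {m : ℕ} :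
    ∀ {d : Fin n →₀ ℕ}, monomial (d + single j m) (1 : k) ∈ J →
      ∃ s : ℕ, monomial (d + single i s) (1 : k) ∈ J := by
  induction m with
  | zero => exact fun h => ⟨0, by simpa using h⟩
  | succ m ih =>
    intro d hd
    obtain ⟨s₁, hs₁⟩ := hB i j hij _ hd (by simp)
    have hexp : d + single j (m + 1) + single i s₁ - single j 1 =
        d + single i s₁ + single j m := by
      rw [single_add, ← add_assoc, add_right_comm _ _ (single i s₁), add_tsub_cancel_right,
        add_right_comm]
    rw [hexp] at hs₁
    obtain ⟨s₂, hs₂⟩ := ih hs₁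
    exact ⟨s₁ + s₂, by rwa [single_add, ← add_assoc]⟩

lemma borelCond_iff_forall_X_mem_radical_colon {J : Ideal (MvPolynomial (Fin n) k)} :
    BorelCond J ↔ ∀ i j : Fin n, i < j → ∀ d : Fin n →₀ ℕ,
      X j ∈ (J.colon {monomial d (1 : k)}).radical →
        X i ∈ (J.colon {monomial d (1 : k)}).radical := by
  simp only [X_mem_radical_colon_monomial_iff, forall_exists_index]
  refine ⟨fun hB i j hij d m hd => hB.exists_monomial_add_single_mem hij hd,
    fun h i j hij d hd hdj => ?_⟩
  obtain ⟨d', rfl⟩ := exists_add_of_le (single_le_iff.2 (Nat.one_le_iff_ne_zero.2 hdj))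
  obtain ⟨s, hs⟩ := h i j hij d' 1 (by rwa [add_comm])
  exact ⟨s, by rwa [add_comm (single j 1), add_right_comm, add_tsub_cancel_right]⟩

lemma IsMonomialIdeal.monomial_mem_of_mem {J : Ideal (MvPolynomial (Fin n) k)}
    (hJ : IsMonomialIdeal J) {f : MvPolynomial (Fin n) k} (hf : f ∈ J) {e : Fin n →₀ ℕ}
    (he : e ∈ f.support) : monomial e (1 : k) ∈ J := by
  obtain ⟨G, rfl⟩ := hJ
  obtain ⟨g, hg, hge⟩ := mem_ideal_span_monomial_image.1 hf e he
  refine mem_ideal_span_monomial_image.2 fun e' he' => ⟨g, hg, ?_⟩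
  rwa [Finset.mem_singleton.1 (support_monomial_subset he')]

lemma colon_finset_inf_monomial_le_colon (J : Ideal (MvPolynomial (Fin n) k))
    (f : MvPolynomial (Fin n) k) :
    f.support.inf (fun e => J.colon {monomial e (1 : k)}) ≤ J.colon {f} := by
  let S : Set (MvPolynomial (Fin n) k) := (fun e => monomial e (1 : k)) '' f.support
  have hf : f ∈ Ideal.span S := mem_ideal_span_monomial_image.2 fun e he => ⟨e, he, le_rfl⟩
  calc f.support.inf (fun e => J.colon {monomial e (1 : k)})
      = J.colon S := by
        ext p
        simp [S, Submodule.mem_finsetInf, Submodule.mem_colon]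
    _ = J.colon (Ideal.span S : Set (MvPolynomial (Fin n) k)) := Ideal.colon_span.symm
    _ ≤ J.colon {f} := Submodule.colon_mono le_rfl (Set.singleton_subset_iff.2 hf)

lemma IsMonomialIdeal.X_mem_radical_colon_iff {J : Ideal (MvPolynomial (Fin n) k)}
    (hJ : IsMonomialIdeal J) {f : MvPolynomial (Fin n) k} {j : Fin n} :
    X j ∈ (J.colon {f}).radical ↔
      ∀ e ∈ f.support, X j ∈ (J.colon {monomial e (1 : k)}).radical := by
  refine ⟨fun ⟨s, hs⟩ e he => ⟨s, ?_⟩, fun h => ?_⟩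
  · rw [Submodule.mem_colon_singleton, smul_eq_mul, X_pow_eq_monomial] at hs ⊢
    rw [monomial_mul, one_mul]
    refine hJ.monomial_mem_of_mem hs ?_
    rwa [MvPolynomial.mem_support_iff, coeff_monomial_mul, one_mul,
      ← MvPolynomial.mem_support_iff]
  · refine Ideal.radical_mono (colon_finset_inf_monomial_le_colon J f) ?_
    rw [← Ideal.radicalInfTopHom_apply, map_finset_inf]
    simpa [Submodule.mem_finsetInf] using h

end Paper

/-- A monomial ideal `J` is of Borel type iff for every `i`
the saturation `J : (x_1,…,x_i)^∞` equals `J : x_i^∞`. -/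
theorem stmt1 {k : Type*} [Field k] {n : ℕ}
    (J : Ideal (MvPolynomial (Fin n) k)) (hJ : IsMonomialIdeal J) :
    BorelCond J ↔
      ∀ i : Fin n, sat J (varIdealLe k i) = sat J (Ideal.span {X i}) := by
  rw [borelCond_iff_forall_X_mem_radical_colon]
  constructor
  · intro hB i
    ext f
    rw [mem_sat_varIdealLe_iff, mem_sat_span_singleton_iff]
    refine ⟨fun h => h i le_rfl, fun hi j hj => ?_⟩
    rcases hj.lt_or_eq with hj | rfl
    · rw [hJ.X_mem_radical_colon_iff] at hi ⊢
      exact fun e he => hB j i hj e (hi e he)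
    · exact hi
  · intro hsat j i hji d hd
    rw [← mem_sat_span_singleton_iff, ← hsat, mem_sat_varIdealLe_iff] at hd
    exact hd j hji.le
end

section
/- If J is a monomial ideal of Borel type in S = k[x_1,...,x_n] and 1 ≤ r ≤ n, then the image Π_r(J) of J under the projection sending x_{r+1},...,x_n to 0 is a monomial ideal of Borel type in k[x_1,...,x_r]. -/
open MvPolynomial Finsupp Module

open Paper MvPolynomial

section Aux3

variable {k : Type*} [Field k] {m : ℕ}

lemma aux3_mem_span_mono (G : Set (Fin m →₀ ℕ)) {f : MvPolynomial (Fin m) k}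
    (hf : f ∈ Ideal.span ((fun d => (monomial d (1:k) : MvPolynomial (Fin m) k)) '' G)) :
    ∀ d ∈ f.support, ∃ g ∈ G, g ≤ d := by
  induction hf using Submodule.span_induction with
  | mem x hx =>
    obtain ⟨g, hg, rfl⟩ := hx
    intro d hd
    classical
    rw [MvPolynomial.support_monomial] at hd
    simp only [one_ne_zero, if_false, Finset.mem_singleton] at hd
    exact ⟨g, hg, hd ▸ le_refl g⟩
  | zero => simp
  | add x y hx hy ihx ihy =>
    intro d hd
    rcases Finset.mem_union.1 (MvPolynomial.support_add hd) with h | h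
    exacts [ihx d h, ihy d h]
  | smul a x hx ih =>
    intro d hd
    have hd' : d ∈ (a * x).support := by simpa [smul_eq_mul] using hd
    obtain ⟨b, _, c, hc, hbc⟩ := Finset.mem_add.1 (MvPolynomial.support_mul a x hd')
    obtain ⟨g, hg, hge⟩ := ih c hc
    refine ⟨g, hg, hge.trans ?_⟩
    calc c ≤ b + c := le_add_self
    _ = d := hbc

lemma aux3_monomial_mem_of_le {J : Ideal (MvPolynomial (Fin m) k)} {g d : Fin m →₀ ℕ}
    (hg : (monomial g (1:k) : MvPolynomial (Fin m) k) ∈ J) (hle : g ≤ d) :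
    (monomial d (1:k) : MvPolynomial (Fin m) k) ∈ J := by
  have h : (monomial d (1:k) : MvPolynomial (Fin m) k)
      = monomial (d - g) 1 * monomial g 1 := by
    rw [monomial_mul, one_mul, tsub_add_cancel_of_le hle]
  rw [h]
  exact Ideal.mul_mem_left _ _ hg

end Aux3

section Main3

variable {k : Type*} [Field k] {n : ℕ} {r : ℕ}

/-- pointwise description of `mapDomain (Fin.castLE hrn)` -/
lemma aux3_lift_apply (hrn : r ≤ n) (e : Fin r →₀ ℕ) (x : Fin n) :
    Finsupp.mapDomain (Fin.castLE hrn) e x = if h : (x : ℕ) < r then e ⟨x, h⟩ else 0 := by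
  by_cases h : (x : ℕ) < r
  · rw [dif_pos h]
    have hx : x = Fin.castLE hrn ⟨x, h⟩ := Fin.ext rfl
    conv_lhs => rw [hx]
    exact Finsupp.mapDomain_apply (Fin.castLE_injective hrn) e _
  · rw [dif_neg h]
    refine Finsupp.mapDomain_notin_range e x ?_
    rintro ⟨a, rfl⟩
    exact h a.isLt

lemma aux3_sect (hrn : r ≤ n) (f : MvPolynomial (Fin r) k) :
    projDown k n r (rename (Fin.castLE hrn) f) = f := by
  rw [projDown, aeval_rename]
  have hg : ((fun i : Fin n => if h : (i : ℕ) < r then (X ⟨i, h⟩ : MvPolynomial (Fin r) k)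
      else 0) ∘ Fin.castLE hrn) = X := by
    funext i
    have hi : ((Fin.castLE hrn i : Fin n) : ℕ) < r := i.isLt
    simp only [Function.comp_apply, dif_pos hi]
    congr 1
  rw [hg, aeval_X_left_apply]

lemma aux3_proj_monomial (hrn : r ≤ n) (e : Fin r →₀ ℕ) :
    projDown k n r (monomial (Finsupp.mapDomain (Fin.castLE hrn) e) (1:k)) = monomial e 1 := by
  rw [← rename_monomial, aux3_sect hrn]

lemma aux3_proj_monomial_zero (hrn : r ≤ n) (d : Fin n →₀ ℕ) (i : Fin n)
    (hi : r ≤ (i : ℕ)) (hdi : d i ≠ 0) :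
    projDown k n r (monomial d (1:k)) = 0 := by
  rw [projDown, aeval_monomial]
  have h0 : (d.prod fun i k' => (if h : (i : ℕ) < r then (X ⟨i, h⟩ : MvPolynomial (Fin r) k)
      else 0) ^ k') = 0 := by
    refine Finset.prod_eq_zero (Finsupp.mem_support_iff.2 hdi) ?_
    show ((if h : (i : ℕ) < r then (X ⟨i, h⟩ : MvPolynomial (Fin r) k) else 0) ^ (d i)) = 0
    rw [dif_neg (not_lt.2 hi), zero_pow hdi]
  rw [h0, mul_zero]

end Main3


/-- If `J` is a monomial ideal of Borel type in `k[x_1,…,x_n]`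
and `1 ≤ r ≤ n`, then `Π_r(J)` is a monomial ideal of Borel type in `k[x_1,…,x_r]`. -/
theorem stmt3 {k : Type*} [Field k] {n : ℕ}
    (J : Ideal (MvPolynomial (Fin n) k)) (hJ : IsBorelType J)
    (r : ℕ) (hr1 : 1 ≤ r) (hrn : r ≤ n) :
    IsBorelType (PiIdeal r J) := by
  classical
  obtain ⟨⟨G, hG⟩, hB⟩ := hJ
  set lift : (Fin r →₀ ℕ) → (Fin n →₀ ℕ) := Finsupp.mapDomain (Fin.castLE hrn) with hliftdef
  set G' : Set (Fin r →₀ ℕ) := {e | lift e ∈ G} with hG'def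
  -- the span description of `PiIdeal r J`
  have hPi : PiIdeal r J
      = Ideal.span ((fun e => (monomial e (1:k) : MvPolynomial (Fin r) k)) '' G') := by
    rw [PiIdeal, hG, Ideal.map_span]
    apply le_antisymm
    · rw [Ideal.span_le]
      rintro x ⟨y, ⟨d, hdG, rfl⟩, rfl⟩
      by_cases htz : ∀ i : Fin n, r ≤ (i : ℕ) → d i = 0
      · -- tail-zero: image is a monomial in G'
        set e : Fin r →₀ ℕ := Finsupp.comapDomain (Fin.castLE hrn) d
          ((Fin.castLE_injective hrn).injOn) with hedef
        have hle : lift e = d := by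
          ext x
          rw [hliftdef, aux3_lift_apply hrn]
          by_cases h : (x : ℕ) < r
          · rw [dif_pos h, hedef, Finsupp.comapDomain_apply]
            congr 1
          · rw [dif_neg h, htz x (not_lt.1 h)]
        have : (projDown k n r).toRingHom (monomial d (1:k)) = monomial e 1 := by
          rw [← hle]
          exact aux3_proj_monomial hrn e
        rw [this]
        exact Ideal.subset_span ⟨e, by rw [hG'def]; exact Set.mem_setOf.2 (hle ▸ hdG), rfl⟩
      · push_neg at htz
        obtain ⟨i, hi, hdi⟩ := htz
        have : (projDown k n r).toRingHom (monomial d (1:k)) = 0 :=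
          aux3_proj_monomial_zero hrn d i hi hdi
        rw [this]
        exact Ideal.zero_mem _
    · rw [Ideal.span_le]
      rintro x ⟨e, he, rfl⟩
      exact Ideal.subset_span ⟨monomial (lift e) 1, ⟨lift e, he, rfl⟩,
        aux3_proj_monomial hrn e⟩
  -- key membership characterization
  have hmem : ∀ e : Fin r →₀ ℕ,
      (monomial e (1:k) : MvPolynomial (Fin r) k) ∈ PiIdeal r J ↔
      (monomial (lift e) (1:k) : MvPolynomial (Fin n) k) ∈ J := by
    intro e
    constructor
    · intro he
      rw [hPi] at he
      have hsup := aux3_mem_span_mono G' he e (by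
        rw [MvPolynomial.support_monomial]
        simp)
      obtain ⟨g, hgG', hge⟩ := hsup
      have hgJ : (monomial (lift g) (1:k) : MvPolynomial (Fin n) k) ∈ J := by
        rw [hG]; exact Ideal.subset_span ⟨lift g, hgG', rfl⟩
      refine aux3_monomial_mem_of_le hgJ ?_
      intro x
      rw [hliftdef]
      rw [aux3_lift_apply hrn, aux3_lift_apply hrn]
      split
      · exact hge _
      · exact le_refl 0
    · intro he
      have := Ideal.mem_map_of_mem (projDown k n r).toRingHom he
      rwa [show (projDown k n r).toRingHom (monomial (lift e) (1:k)) = monomial e 1 from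
        aux3_proj_monomial hrn e] at this
  constructor
  · exact ⟨G', hPi⟩
  · intro i j hij e he hej
    have hJe : (monomial (lift e) (1:k) : MvPolynomial (Fin n) k) ∈ J := (hmem e).1 he
    have hlj : lift e (Fin.castLE hrn j) ≠ 0 := by
      rw [hliftdef, Finsupp.mapDomain_apply (Fin.castLE_injective hrn)]
      exact hej
    have hlt : Fin.castLE hrn i < Fin.castLE hrn j := by
      exact hij
    obtain ⟨s, hs⟩ := hB _ _ hlt (lift e) hJe hlj
    refine ⟨s, (hmem _).2 ?_⟩
    have hkey : lift (e + Finsupp.single i s - Finsupp.single j 1)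
        = lift e + Finsupp.single (Fin.castLE hrn i) s - Finsupp.single (Fin.castLE hrn j) 1 := by
      ext x
      rw [Finsupp.tsub_apply, Finsupp.add_apply, hliftdef, aux3_lift_apply hrn,
        aux3_lift_apply hrn]
      by_cases h : (x : ℕ) < r
      · rw [dif_pos h, dif_pos h, Finsupp.tsub_apply, Finsupp.add_apply]
        have h1 : (Finsupp.single (Fin.castLE hrn i) s) x = (Finsupp.single i s) ⟨x, h⟩ := by
          simp only [Finsupp.single_apply, Fin.ext_iff, Fin.coe_castLE]
        have h2 : (Finsupp.single (Fin.castLE hrn j) 1) x = (Finsupp.single j 1) ⟨x, h⟩ := by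
          simp only [Finsupp.single_apply, Fin.ext_iff, Fin.coe_castLE]
        rw [h1, h2]
      · rw [dif_neg h, dif_neg h]
        have h1 : (Finsupp.single (Fin.castLE hrn i) s) x = 0 := by
          rw [Finsupp.single_apply_eq_zero]
          intro hix
          exact absurd (hix ▸ i.isLt : (x : ℕ) < r) h
        have h2 : (Finsupp.single (Fin.castLE hrn j) 1) x = 0 := by
          rw [Finsupp.single_apply_eq_zero]
          intro hjx
          exact absurd (hjx ▸ j.isLt : (x : ℕ) < r) h
        rw [h1, h2]
        simp
    rw [hkey]
    exact hs
end

section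
/- With the hypotheses of the four-term exact sequence 0 → M_1 → N → M → M_2 → 0 of finitely generated graded S-modules, dim M = dim N = m, d_1 = dim M_1, d_2 = dim M_2, D = max(d_1,d_2): for i = m - D, one has e_i(N) = e_i(M) + (-1)^i [D = d_1] e_0(M_1) − (-1)^i [D = d_2] e_0(M_2), where [P] is 1 if P holds and 0 otherwise. -/
open MvPolynomial Finsupp Module

namespace Paper

variable {k : Type*} [Field k] {n : ℕ}

/-- `g` is a grading of the module `M` over `k[x_1,…,x_n]` by `k`-subspaces,
compatible with the standard grading of the polynomial ring. -/
def IsGrading {M : Type*} [AddCommGroup M] [Module (MvPolynomial (Fin n) k) M]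
    [Module k M] [IsScalarTower k (MvPolynomial (Fin n) k) M]
    (g : ℕ → Submodule k M) : Prop :=
  DirectSum.IsInternal g ∧
    ∀ (i j : ℕ) (s : MvPolynomial (Fin n) k), s.IsHomogeneous j →
      ∀ x ∈ g i, s • x ∈ g (i + j)

/-- The Hilbert series of a graded module, given its grading. -/
noncomputable def hilbMod {M : Type*} [AddCommGroup M] [Module k M]
    (g : ℕ → Submodule k M) : PowerSeries ℤ :=
  PowerSeries.mk fun i => (Module.finrank k (g i) : ℤ)

/-- The Krull dimension of a module `M` over `k[x_1,…,x_n]`. -/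
noncomputable def mdim (k : Type*) [Field k] {n : ℕ} (M : Type*) [AddCommGroup M]
    [Module (MvPolynomial (Fin n) k) M] : WithBot (WithTop ℕ) :=
  ringKrullDim (MvPolynomial (Fin n) k ⧸
    Module.annihilator (MvPolynomial (Fin n) k) M)

end Paper

open Paper MvPolynomial

/-!
In each degree `i` the sequence restricts to an exact sequence of finite-dimensional `k`-spaces,
so `H_N + H_{M₂} = H_M + H_{M₁}`. Submodules and quotients have larger annihilators, so
`d₁, d₂ ≤ m`, and multiplying by `(1 - t)^m` gives
`q_N + (1 - t)^{m - d₂} q₂ = q_M + (1 - t)^{m - d₁} q₁`. As `(1 - t)^e = (-1)^e (t - 1)^e`, the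
term `(1 - t)^{m - d} q` contributes to the coefficient of `(t - 1)^{m - D}` only when `d = D`,
and then exactly `(-1)^{m - D} q(1)`.
-/

instance MvPolynomial.finiteDimensional_homogeneousSubmodule {σ K : Type*} [Finite σ] [Field K]
    (d : ℕ) : FiniteDimensional K (homogeneousSubmodule σ K d) :=
  Submodule.finiteDimensional_of_le (S₂ := restrictTotalDegree σ K d) fun _ hp =>
    (mem_restrictTotalDegree _ _ _).2 ((mem_homogeneousSubmodule _ _).1 hp).totalDegree_le

theorem Ideal.ringKrullDim_quotient_le_of_le {R : Type*} [CommRing R] {I J : Ideal R}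
    (h : I ≤ J) : ringKrullDim (R ⧸ J) ≤ ringKrullDim (R ⧸ I) :=
  ringKrullDim_le_of_surjective (Ideal.Quotient.factor h) (Ideal.Quotient.factor_surjective h)

theorem Module.finrank_add_finrank_eq_of_exact {K A B C D : Type*} [DivisionRing K]
    [AddCommGroup A] [Module K A] [AddCommGroup B] [Module K B] [FiniteDimensional K B]
    [AddCommGroup C] [Module K C] [FiniteDimensional K C] [AddCommGroup D] [Module K D]
    {f : A →ₗ[K] B} {g : B →ₗ[K] C} {h : C →ₗ[K] D} (hf : Function.Injective f)
    (hfg : Function.Exact f g) (hgh : Function.Exact g h) (hh : Function.Surjective h) :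
    finrank K B + finrank K D = finrank K C + finrank K A := by
  have hB := g.finrank_range_add_finrank_ker
  have hC := h.finrank_range_add_finrank_ker
  rw [hfg.linearMap_ker_eq, LinearMap.finrank_range_of_inj hf] at hB
  rw [hgh.linearMap_ker_eq, LinearMap.range_eq_top.2 hh, finrank_top] at hC
  omega

theorem PowerSeries.mul_one_sub_X_pow_eq_of_le {R : Type*} [CommRing R] {H : PowerSeries R}
    {q : Polynomial R} {d m : ℕ} (hq : H * (1 - PowerSeries.X) ^ d = (q : PowerSeries R))
    (h : d ≤ m) :
    H * (1 - PowerSeries.X) ^ m =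
      ((q * (1 - Polynomial.X) ^ (m - d) : Polynomial R) : PowerSeries R) := by
  rw [← Nat.add_sub_cancel' h, pow_add, ← mul_assoc, hq, Nat.add_sub_cancel_left]
  simp

namespace DirectSum

variable {ι R M N P : Type*} [DecidableEq ι] [Semiring R]
  [AddCommMonoid M] [Module R M] [AddCommMonoid N] [Module R N] [AddCommMonoid P] [Module R P]
  {𝓜 : ι → Submodule R M} {𝓝 : ι → Submodule R N} {𝓟 : ι → Submodule R P}
  [Decomposition 𝓜] [Decomposition 𝓝]

theorem decompose_map_apply {F : Type*} [FunLike F M N] [AddMonoidHomClass F M N] (f : F)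
    (hf : ∀ i, ∀ x ∈ 𝓜 i, f x ∈ 𝓝 i) (x : M) (i : ι) :
    (decompose 𝓝 (f x) i : N) = f (decompose 𝓜 x i) := by
  induction x using Decomposition.inductionOn 𝓜 with
  | zero => simp
  | homogeneous x =>
    obtain ⟨x, hx⟩ := x
    by_cases hji : ‹ι› = i
    · subst hji
      rw [decompose_of_mem_same 𝓜 hx, decompose_of_mem_same 𝓝 (hf _ x hx)]
    · rw [decompose_of_mem_ne 𝓜 hx hji, decompose_of_mem_ne 𝓝 (hf _ x hx) hji, map_zero]
  | add x y hx hy => simp only [map_add, decompose_add, add_apply, Submodule.coe_add, hx, hy]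

theorem exact_restrict_of_exact {f : M →ₗ[R] N} {g : N →ₗ[R] P}
    (hf : ∀ i, ∀ x ∈ 𝓜 i, f x ∈ 𝓝 i) (hg : ∀ i, ∀ x ∈ 𝓝 i, g x ∈ 𝓟 i)
    (hfg : Function.Exact f g) (i : ι) :
    Function.Exact (f.restrict (hf i)) (g.restrict (hg i)) := by
  rintro ⟨y, hy⟩
  simp only [Subtype.ext_iff, LinearMap.restrict_apply, Submodule.coe_zero, Set.mem_range,
    hfg y, Subtype.exists]
  constructor
  · rintro ⟨x, rfl⟩
    refine ⟨_, (decompose 𝓜 x i).2, ?_⟩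
    rw [← decompose_map_apply f hf, decompose_of_mem_same 𝓝 hy]
  · rintro ⟨x, -, rfl⟩
    exact ⟨x, rfl⟩

theorem surjective_restrict_of_surjective {f : M →ₗ[R] N} (hf : ∀ i, ∀ x ∈ 𝓜 i, f x ∈ 𝓝 i)
    (hsurj : Function.Surjective f) (i : ι) : Function.Surjective (f.restrict (hf i)) := by
  rintro ⟨y, hy⟩
  obtain ⟨x, rfl⟩ := hsurj y
  refine ⟨decompose 𝓜 x i, Subtype.ext ?_⟩
  change f (decompose 𝓜 x i) = f x
  rw [← decompose_map_apply f hf, decompose_of_mem_same 𝓝 hy]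

omit [Decomposition 𝓝] in
variable (𝓜) in
theorem exists_finset_homogeneous_span_eq_top (A : Type*) [Semiring A] [Module A M]
    [Module.Finite A M] :
    ∃ s : Finset (ι × M), (∀ p ∈ s, p.2 ∈ 𝓜 p.1) ∧
      Submodule.span A (Prod.snd '' (s : Set (ι × M))) = ⊤ := by
  classical
  obtain ⟨T, hT⟩ := Module.Finite.fg_top (R := A) (M := M)
  refine ⟨T.biUnion fun t => (decompose 𝓜 t).support.image fun j => (j, (decompose 𝓜 t j : M)),
    ?_, ?_⟩
  · simp only [Finset.mem_biUnion, Finset.mem_image]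
    rintro _ ⟨t, -, j, -, rfl⟩
    exact (decompose 𝓜 t j).2
  · rw [eq_top_iff, ← hT, Submodule.span_le]
    intro t ht
    rw [← sum_support_decompose 𝓜 t]
    refine Submodule.sum_mem _ fun j hj => Submodule.subset_span ⟨(j, _), ?_, rfl⟩
    exact Finset.mem_biUnion.2 ⟨t, ht, Finset.mem_image_of_mem _ hj⟩

end DirectSum

namespace Paper

open DirectSum

section FiniteGraded

variable {k : Type*} [Field k] {n : ℕ} {M : Type*} [AddCommGroup M]
  [Module (MvPolynomial (Fin n) k) M] [Module k M] [IsScalarTower k (MvPolynomial (Fin n) k) M]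
  {g : ℕ → Submodule k M}

theorem IsGrading.decompose_smul_mem (hg : IsGrading (n := n) g) [Decomposition g] {v : M}
    {e : ℕ} (hv : v ∈ g e) (a : MvPolynomial (Fin n) k) (i : ℕ) :
    (decompose g (a • v) i : M) ∈ (homogeneousSubmodule (Fin n) k (i - e)).map
      ((LinearMap.toSpanSingleton (MvPolynomial (Fin n) k) M v).restrictScalars k) := by
  rw [← sum_homogeneousComponent a, Finset.sum_smul, decompose_sum, DFinsupp.finsetSum_apply,
    Submodule.coe_sum]
  refine Submodule.sum_mem _ fun d _ => ?_
  have hd := hg.2 e d _ (homogeneousComponent_isHomogeneous d a) v hv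
  by_cases hi : e + d = i
  · subst hi
    rw [decompose_of_mem_same g hd, Nat.add_sub_cancel_left]
    exact ⟨_, homogeneousComponent_mem d a, rfl⟩
  · rw [decompose_of_mem_ne g hd hi]
    exact zero_mem _

theorem IsGrading.finiteDimensional [Module.Finite (MvPolynomial (Fin n) k) M]
    (hg : IsGrading (n := n) g) (i : ℕ) : FiniteDimensional k (g i) := by
  classical
  let := hg.1.chooseDecomposition
  obtain ⟨s, hs, hspan⟩ := exists_finset_homogeneous_span_eq_top g (MvPolynomial (Fin n) k)
  let V : ℕ × M → Submodule k M := fun p => (homogeneousSubmodule (Fin n) k (i - p.1)).map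
    ((LinearMap.toSpanSingleton (MvPolynomial (Fin n) k) M p.2).restrictScalars k)
  refine Submodule.finiteDimensional_of_le (S₂ := s.sup V) fun y hy => ?_
  obtain ⟨c, hc⟩ := (Submodule.mem_span_image_finset_iff_exists_fun' _).1
    (hspan ▸ Submodule.mem_top : y ∈ Submodule.span _ (Prod.snd '' (s : Set (ℕ × M))))
  rw [← decompose_of_mem_same g hy, ← hc, decompose_sum, DFinsupp.finsetSum_apply,
    Submodule.coe_sum]
  exact Submodule.sum_mem _ fun p hp =>
    Finset.le_sup (f := V) hp (hg.decompose_smul_mem (hs p hp) (c p) i)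

end FiniteGraded

section HilbertSeries

variable {k : Type*} [Field k] {n : ℕ} {M₁ N M M₂ : Type*}
  [AddCommGroup M₁] [Module (MvPolynomial (Fin n) k) M₁]
  [Module k M₁] [IsScalarTower k (MvPolynomial (Fin n) k) M₁]
  [AddCommGroup N] [Module (MvPolynomial (Fin n) k) N]
  [Module k N] [IsScalarTower k (MvPolynomial (Fin n) k) N]
  [Module.Finite (MvPolynomial (Fin n) k) N]
  [AddCommGroup M] [Module (MvPolynomial (Fin n) k) M]
  [Module k M] [IsScalarTower k (MvPolynomial (Fin n) k) M]
  [Module.Finite (MvPolynomial (Fin n) k) M]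
  [AddCommGroup M₂] [Module (MvPolynomial (Fin n) k) M₂]
  [Module k M₂] [IsScalarTower k (MvPolynomial (Fin n) k) M₂]

theorem hilbMod_add_eq_of_exact {g₁ : ℕ → Submodule k M₁} {gN : ℕ → Submodule k N}
    {gM : ℕ → Submodule k M} {g₂ : ℕ → Submodule k M₂}
    (hg₁ : IsGrading (n := n) g₁) (hgN : IsGrading (n := n) gN) (hgM : IsGrading (n := n) gM)
    (hg₂ : IsGrading (n := n) g₂) {f₁ : M₁ →ₗ[MvPolynomial (Fin n) k] N}
    {f₂ : N →ₗ[MvPolynomial (Fin n) k] M} {f₃ : M →ₗ[MvPolynomial (Fin n) k] M₂}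
    (hdeg₁ : ∀ i, ∀ x ∈ g₁ i, f₁ x ∈ gN i) (hdeg₂ : ∀ i, ∀ x ∈ gN i, f₂ x ∈ gM i)
    (hdeg₃ : ∀ i, ∀ x ∈ gM i, f₃ x ∈ g₂ i) (hinj : Function.Injective f₁)
    (hex₁ : Function.Exact f₁ f₂) (hex₂ : Function.Exact f₂ f₃)
    (hsurj : Function.Surjective f₃) :
    hilbMod gN + hilbMod g₂ = hilbMod gM + hilbMod g₁ := by
  let := hg₁.1.chooseDecomposition
  let := hgN.1.chooseDecomposition
  let := hgM.1.chooseDecomposition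
  let := hg₂.1.chooseDecomposition
  ext i
  have := hgN.finiteDimensional i
  have := hgM.finiteDimensional i
  have hinj_i : Function.Injective ((f₁.restrictScalars k).restrict (hdeg₁ i)) :=
    fun x y hxy => Subtype.ext (hinj (congrArg Subtype.val hxy))
  have h := Module.finrank_add_finrank_eq_of_exact hinj_i
    (exact_restrict_of_exact (f := f₁.restrictScalars k) (g := f₂.restrictScalars k)
      hdeg₁ hdeg₂ hex₁ i)
    (exact_restrict_of_exact (f := f₂.restrictScalars k) (g := f₃.restrictScalars k)
      hdeg₂ hdeg₃ hex₂ i)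
    (surjective_restrict_of_surjective (f := f₃.restrictScalars k) hdeg₃ hsurj i)
  simp only [map_add, hilbMod, PowerSeries.coeff_mk]
  exact_mod_cast h

end HilbertSeries

theorem mdim_le_of_injective {k : Type*} [Field k] {n : ℕ} {M N : Type*} [AddCommGroup M]
    [Module (MvPolynomial (Fin n) k) M] [AddCommGroup N] [Module (MvPolynomial (Fin n) k) N]
    {f : M →ₗ[MvPolynomial (Fin n) k] N} (hf : Function.Injective f) :
    mdim (n := n) k M ≤ mdim (n := n) k N :=
  Ideal.ringKrullDim_quotient_le_of_le (f.annihilator_le_of_injective hf)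

theorem mdim_le_of_surjective {k : Type*} [Field k] {n : ℕ} {M N : Type*} [AddCommGroup M]
    [Module (MvPolynomial (Fin n) k) M] [AddCommGroup N] [Module (MvPolynomial (Fin n) k) N]
    {f : M →ₗ[MvPolynomial (Fin n) k] N} (hf : Function.Surjective f) :
    mdim (n := n) k N ≤ mdim (n := n) k M :=
  Ideal.ringKrullDim_quotient_le_of_le (f.annihilator_le_of_surjective hf)

theorem hc_add (p q : Polynomial ℤ) (i : ℕ) : hc (p + q) i = hc p i + hc q i := by
  simp [hc]

theorem hc_zero (q : Polynomial ℤ) : hc q 0 = q.eval 1 :=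
  Polynomial.taylor_coeff_zero _ _

theorem hc_mul_one_sub_X_pow (q : Polynomial ℤ) (e i : ℕ) :
    hc (q * (1 - Polynomial.X) ^ e) i = if e ≤ i then (-1) ^ e * hc q (i - e) else 0 := by
  have h : Polynomial.taylor (1 : ℤ) ((1 - Polynomial.X) ^ e) =
      Polynomial.C ((-1) ^ e) * Polynomial.X ^ e := by
    rw [Polynomial.taylor_pow, map_sub, Polynomial.taylor_one, Polynomial.taylor_X,
      Polynomial.C_1, sub_add_cancel_right, neg_pow, ← Polynomial.C_1, ← Polynomial.C_neg,
      ← Polynomial.C_pow]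
  rw [hc, Polynomial.taylor_mul, h, mul_left_comm, Polynomial.coeff_C_mul,
    Polynomial.coeff_mul_X_pow']
  split_ifs <;> simp [hc]

theorem hc_mul_one_sub_X_pow_sub (q : Polynomial ℤ) {d D m : ℕ} (hdD : d ≤ D) (hDm : D ≤ m) :
    hc (q * (1 - Polynomial.X) ^ (m - d)) (m - D) =
      (-1) ^ (m - D) * if D = d then q.eval 1 else 0 := by
  rw [hc_mul_one_sub_X_pow]
  by_cases hD : D = d
  · subst hD
    simp [hc_zero]
  · rw [if_neg (by omega), if_neg hD, mul_zero]

end Paper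

theorem stmt8_general
    {k : Type*} [Field k] {n : ℕ}
    {M₁ N M M₂ : Type*}
    [AddCommGroup M₁] [Module (MvPolynomial (Fin n) k) M₁]
    [Module k M₁] [IsScalarTower k (MvPolynomial (Fin n) k) M₁]
    [AddCommGroup N] [Module (MvPolynomial (Fin n) k) N]
    [Module k N] [IsScalarTower k (MvPolynomial (Fin n) k) N] [Module.Finite (MvPolynomial (Fin n) k) N]
    [AddCommGroup M] [Module (MvPolynomial (Fin n) k) M]
    [Module k M] [IsScalarTower k (MvPolynomial (Fin n) k) M] [Module.Finite (MvPolynomial (Fin n) k) M]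
    [AddCommGroup M₂] [Module (MvPolynomial (Fin n) k) M₂]
    [Module k M₂] [IsScalarTower k (MvPolynomial (Fin n) k) M₂]
    (g₁ : ℕ → Submodule k M₁) (gN : ℕ → Submodule k N)
    (gM : ℕ → Submodule k M) (g₂ : ℕ → Submodule k M₂)
    (hg₁ : IsGrading (n := n) g₁) (hgN : IsGrading (n := n) gN) (hgM : IsGrading (n := n) gM) (hg₂ : IsGrading (n := n) g₂)
    (f₁ : M₁ →ₗ[MvPolynomial (Fin n) k] N) (f₂ : N →ₗ[MvPolynomial (Fin n) k] M)
    (f₃ : M →ₗ[MvPolynomial (Fin n) k] M₂)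
    (hdeg₁ : ∀ i : ℕ, ∀ x ∈ g₁ i, f₁ x ∈ gN i)
    (hdeg₂ : ∀ i : ℕ, ∀ x ∈ gN i, f₂ x ∈ gM i)
    (hdeg₃ : ∀ i : ℕ, ∀ x ∈ gM i, f₃ x ∈ g₂ i)
    (hinj : Function.Injective f₁) (hex₁ : Function.Exact f₁ f₂)
    (hex₂ : Function.Exact f₂ f₃) (hsurj : Function.Surjective f₃)
    (m d₁ d₂ : ℕ)
    (hdimN : mdim (n := n) k N = (m : WithBot (WithTop ℕ)))
    (hdimM : mdim (n := n) k M = (m : WithBot (WithTop ℕ)))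
    (hdim₁ : mdim (n := n) k M₁ = (d₁ : WithBot (WithTop ℕ)))
    (hdim₂ : mdim (n := n) k M₂ = (d₂ : WithBot (WithTop ℕ)))
    (qN qM q₁ q₂ : Polynomial ℤ)
    (hqN : hilbMod gN * (1 - PowerSeries.X) ^ m = (qN : PowerSeries ℤ))
    (hqM : hilbMod gM * (1 - PowerSeries.X) ^ m = (qM : PowerSeries ℤ))
    (hq₁ : hilbMod g₁ * (1 - PowerSeries.X) ^ d₁ = (q₁ : PowerSeries ℤ))
    (hq₂ : hilbMod g₂ * (1 - PowerSeries.X) ^ d₂ = (q₂ : PowerSeries ℤ)) :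
    hc qN (m - max d₁ d₂) =
      hc qM (m - max d₁ d₂)
        + (-1 : ℤ) ^ (m - max d₁ d₂) * (if max d₁ d₂ = d₁ then q₁.eval 1 else 0)
        - (-1 : ℤ) ^ (m - max d₁ d₂) * (if max d₁ d₂ = d₂ then q₂.eval 1 else 0) := by
  have hd₁ : d₁ ≤ m := by
    have h := mdim_le_of_injective hinj
    rw [hdim₁, hdimN] at h
    exact_mod_cast h
  have hd₂ : d₂ ≤ m := by
    have h := mdim_le_of_surjective hsurj
    rw [hdim₂, hdimM] at h
    exact_mod_cast h
  have hpoly : qN + q₂ * (1 - Polynomial.X) ^ (m - d₂) =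
      qM + q₁ * (1 - Polynomial.X) ^ (m - d₁) := by
    apply Polynomial.coe_inj.1
    rw [Polynomial.coe_add, Polynomial.coe_add, ← hqN, ← hqM,
      ← PowerSeries.mul_one_sub_X_pow_eq_of_le hq₁ hd₁,
      ← PowerSeries.mul_one_sub_X_pow_eq_of_le hq₂ hd₂, ← add_mul, ← add_mul,
      hilbMod_add_eq_of_exact hg₁ hgN hgM hg₂ hdeg₁ hdeg₂ hdeg₃ hinj hex₁ hex₂ hsurj]
  have h := congrArg (hc · (m - max d₁ d₂)) hpoly
  simp only [hc_add, hc_mul_one_sub_X_pow_sub _ (le_max_left d₁ d₂) (max_le hd₁ hd₂),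
    hc_mul_one_sub_X_pow_sub _ (le_max_right d₁ d₂) (max_le hd₁ hd₂)] at h
  linarith

/-- In the setting of the four-term exact sequence, at `i = m - D`
one has `e_i(N) = e_i(M) + (-1)^i·[D = d₁]·e₀(M₁) − (-1)^i·[D = d₂]·e₀(M₂)`. -/
theorem stmt8
    {k : Type*} [Field k] {n : ℕ}
    {M₁ N M M₂ : Type*}
    [AddCommGroup M₁] [Module (MvPolynomial (Fin n) k) M₁]
    [Module k M₁] [IsScalarTower k (MvPolynomial (Fin n) k) M₁] [Module.Finite (MvPolynomial (Fin n) k) M₁]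
    [AddCommGroup N] [Module (MvPolynomial (Fin n) k) N]
    [Module k N] [IsScalarTower k (MvPolynomial (Fin n) k) N] [Module.Finite (MvPolynomial (Fin n) k) N]
    [AddCommGroup M] [Module (MvPolynomial (Fin n) k) M]
    [Module k M] [IsScalarTower k (MvPolynomial (Fin n) k) M] [Module.Finite (MvPolynomial (Fin n) k) M]
    [AddCommGroup M₂] [Module (MvPolynomial (Fin n) k) M₂]
    [Module k M₂] [IsScalarTower k (MvPolynomial (Fin n) k) M₂] [Module.Finite (MvPolynomial (Fin n) k) M₂]
    (g₁ : ℕ → Submodule k M₁) (gN : ℕ → Submodule k N)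
    (gM : ℕ → Submodule k M) (g₂ : ℕ → Submodule k M₂)
    (hg₁ : IsGrading (n := n) g₁) (hgN : IsGrading (n := n) gN) (hgM : IsGrading (n := n) gM) (hg₂ : IsGrading (n := n) g₂)
    (f₁ : M₁ →ₗ[MvPolynomial (Fin n) k] N) (f₂ : N →ₗ[MvPolynomial (Fin n) k] M)
    (f₃ : M →ₗ[MvPolynomial (Fin n) k] M₂)
    (hdeg₁ : ∀ i : ℕ, ∀ x ∈ g₁ i, f₁ x ∈ gN i)
    (hdeg₂ : ∀ i : ℕ, ∀ x ∈ gN i, f₂ x ∈ gM i)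
    (hdeg₃ : ∀ i : ℕ, ∀ x ∈ gM i, f₃ x ∈ g₂ i)
    (hinj : Function.Injective f₁) (hex₁ : Function.Exact f₁ f₂)
    (hex₂ : Function.Exact f₂ f₃) (hsurj : Function.Surjective f₃)
    (m d₁ d₂ : ℕ)
    (hdimN : mdim (n := n) k N = (m : WithBot (WithTop ℕ)))
    (hdimM : mdim (n := n) k M = (m : WithBot (WithTop ℕ)))
    (hdim₁ : mdim (n := n) k M₁ = (d₁ : WithBot (WithTop ℕ)))
    (hdim₂ : mdim (n := n) k M₂ = (d₂ : WithBot (WithTop ℕ)))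
    (qN qM q₁ q₂ : Polynomial ℤ)
    (hqN : hilbMod gN * (1 - PowerSeries.X) ^ m = (qN : PowerSeries ℤ))
    (hqN1 : qN.eval 1 ≠ 0)
    (hqM : hilbMod gM * (1 - PowerSeries.X) ^ m = (qM : PowerSeries ℤ))
    (hqM1 : qM.eval 1 ≠ 0)
    (hq₁ : hilbMod g₁ * (1 - PowerSeries.X) ^ d₁ = (q₁ : PowerSeries ℤ))
    (hq₁1 : q₁.eval 1 ≠ 0)
    (hq₂ : hilbMod g₂ * (1 - PowerSeries.X) ^ d₂ = (q₂ : PowerSeries ℤ))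
    (hq₂1 : q₂.eval 1 ≠ 0) :
    hc qN (m - max d₁ d₂) =
      hc qM (m - max d₁ d₂)
        + (-1 : ℤ) ^ (m - max d₁ d₂) * (if max d₁ d₂ = d₁ then q₁.eval 1 else 0)
        - (-1 : ℤ) ^ (m - max d₁ d₂) * (if max d₁ d₂ = d₂ then q₂.eval 1 else 0) :=
  stmt8_general g₁ gN gM g₂ hg₁ hgN hgM hg₂ f₁ f₂ f₃ hdeg₁ hdeg₂ hdeg₃ hinj hex₁ hex₂ hsurj m d₁ d₂
    hdimN hdimM hdim₁ hdim₂ qN qM q₁ q₂ hqN hqM hq₁ hq₂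
end

section
/- Let J be a monomial ideal of Borel type in S = k[x_1,...,x_n] with dim(S/J) ≥ n − r, J_1 = (J ∩ k[x_1,...,x_r])S, J_2 = J : (x_{r+1}···x_n)^∞. Then the following are equivalent: (a) Π_r(J_2) = Π_r(J) + (u) for some monomial u ∈ (Π_r(J) : m(r)) \ Π_r(J), where m(r) = (x_1,...,x_r); (b) rank_{k[x_{r+1},...,x_n]}(J_2/J_1) = 1. -/
open MvPolynomial Finsupp Module

open Paper MvPolynomial

/-!
Since `J` is a monomial ideal, so are `J₁ = Jone r J` and `J₂ = Phi r J`, and both are generated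
by monomials in `x_1,…,x_r`. Writing `S = T[x_1,…,x_r]` with `T = k[x_{r+1},…,x_n]`, the classes
of the monomials `x^w` in `x_1,…,x_r` with `x^w ∈ J₂ \ J₁` therefore form a `T`-basis of `J₂/J₁`,
and `x^w ∈ J₂ \ J₁` iff `x^w ∈ Π_r(J₂) \ Π_r(J)`. So (b) says that exactly one monomial `u` lies
in `Π_r(J₂) \ Π_r(J)`. For monomial ideals `I ⊆ I'` this is (a): if `I' = I + (u)` with
`u ∈ (I : 𝔪) \ I`, every monomial of `I' \ I` is a multiple of `u`, and a proper multiple lies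
in `I`; conversely, if `u` is the only monomial of `I' \ I`, each `x_j u ∈ I'` differs from `u`
and so lies in `I`.
-/

namespace Paper

section MonomialClosed

variable {R σ : Type*} [CommSemiring R]

def IsMonomialClosed (P : Ideal (MvPolynomial σ R)) : Prop :=
  ∀ f ∈ P, ∀ a ∈ f.support, monomial a (1 : R) ∈ P

theorem isMonomialClosed_span_monomial_image (G : Set (σ →₀ ℕ)) :
    IsMonomialClosed (Ideal.span ((fun d => (monomial d (1 : R) : MvPolynomial σ R)) '' G)) := by
  classical
  intro f hf a ha
  rw [mem_ideal_span_monomial_image] at hf ⊢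
  intro b hb
  rw [Finset.mem_singleton.mp (support_monomial_subset hb)]
  exact hf a ha

theorem monomial_one_mem_of_le {P : Ideal (MvPolynomial σ R)} {d a : σ →₀ ℕ} (h : d ≤ a)
    (hd : monomial d (1 : R) ∈ P) : monomial a (1 : R) ∈ P := by
  rw [← tsub_add_cancel_of_le h, ← one_mul (1 : R), ← monomial_mul]
  exact P.mul_mem_left _ hd

theorem mem_of_forall_monomial_mem {P : Ideal (MvPolynomial σ R)} {f : MvPolynomial σ R}
    (h : ∀ a ∈ f.support, monomial a (1 : R) ∈ P) : f ∈ P := by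
  rw [f.as_sum]
  refine P.sum_mem fun a ha => ?_
  rw [← mul_one (coeff a f), ← C_mul_monomial]
  exact P.mul_mem_left _ (h a ha)

namespace IsMonomialClosed

variable {P : Ideal (MvPolynomial σ R)}

theorem mem_of_support_subset (hP : IsMonomialClosed P) {f g : MvPolynomial σ R} (hf : f ∈ P)
    (hgf : g.support ⊆ f.support) : g ∈ P :=
  mem_of_forall_monomial_mem fun a ha => hP f hf a (hgf ha)

theorem monomial_mem_sup_span [Nontrivial R] (hP : IsMonomialClosed P) {u w : σ →₀ ℕ}
    (h : monomial w (1 : R) ∈ P ⊔ Ideal.span {monomial u (1 : R)}) :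
    monomial w (1 : R) ∈ P ∨ u ≤ w := by
  classical
  refine or_iff_not_imp_right.mpr fun huw => ?_
  obtain ⟨p, hp, q, hq, hpq⟩ := Submodule.mem_sup.mp h
  obtain ⟨s, rfl⟩ := Ideal.mem_span_singleton'.mp hq
  have hcoeff := congrArg (coeff w) hpq
  rw [coeff_add, coeff_mul_monomial', if_neg huw, add_zero, coeff_monomial, if_pos rfl] at hcoeff
  exact hP p hp w (mem_support_iff.mpr (hcoeff ▸ one_ne_zero))

theorem aeval_mem (hP : IsMonomialClosed P) {ψ : σ → MvPolynomial σ R}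
    (hψ : ∀ i, ψ i = X i ∨ ψ i = 0) {f : MvPolynomial σ R} (hf : f ∈ P) : aeval ψ f ∈ P := by
  classical
  rw [f.as_sum, map_sum]
  refine P.sum_mem fun a ha => ?_
  rw [aeval_monomial, Finsupp.prod]
  by_cases h : ∀ i ∈ a.support, ψ i = X i
  · rw [Finset.prod_congr rfl fun i hi => by rw [h i hi], prod_X_pow_eq_monomial]
    exact P.mul_mem_left _ (hP f hf a ha)
  · push Not at h
    obtain ⟨i, hi, hψi⟩ := h
    rw [Finset.prod_eq_zero hi (by rw [(hψ i).resolve_left hψi,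
      zero_pow (Finsupp.mem_support_iff.mp hi)]), mul_zero]
    exact P.zero_mem

end IsMonomialClosed

def monomialGap (I I' : Ideal (MvPolynomial σ R)) : Set (σ →₀ ℕ) :=
  {w | monomial w (1 : R) ∈ I' ∧ monomial w (1 : R) ∉ I}

theorem monomial_mul_X (u : σ →₀ ℕ) (j : σ) :
    (monomial u (1 : R) : MvPolynomial σ R) * X j = monomial (u + Finsupp.single j 1) 1 := by
  rw [monomial_add_single, pow_one]

theorem exists_add_single_le_of_lt {u w : σ →₀ ℕ} (h : u < w) :
    ∃ j, u + Finsupp.single j 1 ≤ w := by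
  classical
  obtain ⟨j, hj⟩ : ∃ j, u j < w j := by
    by_contra! hle
    exact h.not_ge (Finsupp.le_def.mpr hle)
  refine ⟨j, Finsupp.le_def.mpr fun i => ?_⟩
  rw [Finsupp.add_apply, Finsupp.single_apply]
  split_ifs with hji
  · exact hji ▸ hj
  · simpa using h.le i

theorem exists_colon_eq_sup_span_iff [Nontrivial R] {I I' : Ideal (MvPolynomial σ R)}
    (hI : IsMonomialClosed I) (hI' : IsMonomialClosed I') (hII' : I ≤ I') :
    (∃ u : σ →₀ ℕ, monomial u (1 : R) ∈
        Submodule.colon I (Ideal.span (Set.range (X : σ → MvPolynomial σ R))) ∧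
      monomial u (1 : R) ∉ I ∧ I' = I ⊔ Ideal.span {monomial u (1 : R)}) ↔
    ∃ u, monomialGap I I' = {u} := by
  simp_rw [Ideal.colon_span, Submodule.mem_colon, Set.forall_mem_range, smul_eq_mul,
    monomial_mul_X]
  constructor
  · rintro ⟨u, hcolon, hu, rfl⟩
    refine ⟨u, Set.eq_singleton_iff_unique_mem.mpr
      ⟨⟨Ideal.mem_sup_right (Ideal.mem_span_singleton_self _), hu⟩, ?_⟩⟩
    rintro w ⟨hw', hw⟩
    have huw : u ≤ w := (hI.monomial_mem_sup_span hw').resolve_left hw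
    by_contra hne
    obtain ⟨j, hj⟩ := exists_add_single_le_of_lt (lt_of_le_of_ne huw (Ne.symm hne))
    exact hw (monomial_one_mem_of_le hj (hcolon j))
  · rintro ⟨u, hgap⟩
    have hu : u ∈ monomialGap I I' := hgap ▸ rfl
    have only_u : ∀ w, monomial w (1 : R) ∈ I' → monomial w (1 : R) ∉ I → w = u :=
      fun w hw' hw => Set.mem_singleton_iff.mp (hgap ▸ ⟨hw', hw⟩)
    refine ⟨u, fun j => ?_, hu.2, le_antisymm ?_ (sup_le hII' ?_)⟩
    · by_contra hj
      have := only_u _ (monomial_mul_X (R := R) u j ▸ I'.mul_mem_right _ hu.1) hj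
      simpa using congrArg (· j) this
    · refine fun f hf => mem_of_forall_monomial_mem fun a ha => ?_
      by_cases haI : monomial a (1 : R) ∈ I
      · exact Ideal.mem_sup_left haI
      · rw [only_u a (hI' f hf a ha) haI]
        exact Ideal.mem_sup_right (Ideal.mem_span_singleton_self _)
    · exact (Ideal.span_singleton_le_iff_mem _).mpr hu.1

end MonomialClosed

section Split

variable {n r : ℕ} (hrn : r ≤ n)

theorem tailEmb_injective : Function.Injective (tailEmb n r hrn) := fun a b h => by
  simpa [tailEmb, Fin.ext_iff] using h

noncomputable def liftHead (w : Fin r →₀ ℕ) : Fin n →₀ ℕ :=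
  Finsupp.mapDomain (Fin.castLE hrn) w

noncomputable def liftTail (b : Fin (n - r) →₀ ℕ) : Fin n →₀ ℕ :=
  Finsupp.mapDomain (tailEmb n r hrn) b

noncomputable def restrHead (a : Fin n →₀ ℕ) : Fin r →₀ ℕ :=
  Finsupp.comapDomain (Fin.castLE hrn) a (Fin.castLE_injective hrn).injOn

noncomputable def restrTail (a : Fin n →₀ ℕ) : Fin (n - r) →₀ ℕ :=
  Finsupp.comapDomain (tailEmb n r hrn) a (tailEmb_injective hrn).injOn

theorem liftHead_apply (w : Fin r →₀ ℕ) (i : Fin n) :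
    liftHead hrn w i = if h : (i : ℕ) < r then w ⟨i, h⟩ else 0 := by
  split_ifs with h
  · exact Finsupp.mapDomain_apply (Fin.castLE_injective hrn) w ⟨i, h⟩
  · exact Finsupp.mapDomain_of_notMem_range _ _ (by rintro ⟨j, rfl⟩; exact h j.isLt)

theorem liftTail_apply (b : Fin (n - r) →₀ ℕ) (i : Fin n) :
    liftTail hrn b i = if h : r ≤ (i : ℕ) then b ⟨i - r, by omega⟩ else 0 := by
  split_ifs with h
  · have hi : tailEmb n r hrn ⟨i - r, by omega⟩ = i := Fin.ext (by simp [tailEmb]; omega)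
    conv_lhs => rw [← hi]
    exact Finsupp.mapDomain_apply (tailEmb_injective hrn) b _
  · exact Finsupp.mapDomain_of_notMem_range _ _ (by
      rintro ⟨j, rfl⟩; exact h (Nat.le_add_right r j))

theorem liftHead_restrHead_add_liftTail_restrTail (a : Fin n →₀ ℕ) :
    liftHead hrn (restrHead hrn a) + liftTail hrn (restrTail hrn a) = a := by
  ext i
  rw [Finsupp.add_apply, liftHead_apply, liftTail_apply]
  by_cases h : (i : ℕ) < r
  · rw [dif_pos h, dif_neg (by omega), add_zero]
    rfl
  · rw [dif_neg h, dif_pos (by omega), zero_add]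
    exact congrArg a (Fin.ext (by simp [tailEmb]; omega))

theorem restrHead_liftHead_add_liftTail (w : Fin r →₀ ℕ) (b : Fin (n - r) →₀ ℕ) :
    restrHead hrn (liftHead hrn w + liftTail hrn b) = w := by
  ext j
  simp only [restrHead, Finsupp.comapDomain_apply, Finsupp.add_apply, liftHead_apply,
    liftTail_apply, Fin.val_castLE, j.isLt, dif_pos]
  rw [dif_neg (by omega), add_zero]

theorem restrTail_liftHead_add_liftTail (w : Fin r →₀ ℕ) (b : Fin (n - r) →₀ ℕ) :
    restrTail hrn (liftHead hrn w + liftTail hrn b) = b := by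
  ext j
  simp only [restrTail, Finsupp.comapDomain_apply, Finsupp.add_apply, liftHead_apply,
    liftTail_apply, tailEmb]
  rw [dif_neg (by omega), dif_pos (by omega), zero_add]
  simp

theorem restrHead_liftHead (w : Fin r →₀ ℕ) : restrHead hrn (liftHead hrn w) = w :=
  Finsupp.comapDomain_mapDomain _ (Fin.castLE_injective hrn) w

theorem liftHead_restrHead_le (a : Fin n →₀ ℕ) : liftHead hrn (restrHead hrn a) ≤ a := by
  conv_rhs => rw [← liftHead_restrHead_add_liftTail_restrTail hrn a]
  exact le_self_add

theorem le_liftHead_restrHead {d a : Fin n →₀ ℕ} (hd : ∀ i : Fin n, r ≤ (i : ℕ) → d i = 0)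
    (hda : d ≤ a) : d ≤ liftHead hrn (restrHead hrn a) := fun i => by
  rw [liftHead_apply]
  split_ifs with h
  · exact hda i
  · exact (hd i (by omega)).le

end Split

section TailCoeff

variable {k : Type*} [Field k] {n r : ℕ} (hrn : r ≤ n)

theorem tailIncl_apply (t : MvPolynomial (Fin (n - r)) k) :
    tailIncl k r hrn t = rename (tailEmb n r hrn) t := rfl

theorem coeff_tailIncl_mul_monomial (t : MvPolynomial (Fin (n - r)) k) (w : Fin r →₀ ℕ)
    (a : Fin n →₀ ℕ) :
    coeff a (tailIncl k r hrn t * monomial (liftHead hrn w) 1) =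
      if restrHead hrn a = w then coeff (restrTail hrn a) t else 0 := by
  rw [tailIncl_apply]
  split_ifs with h
  · conv_lhs => rw [← liftHead_restrHead_add_liftTail_restrTail hrn a, h, add_comm,
      coeff_mul_monomial, mul_one]
    exact coeff_rename_mapDomain _ (tailEmb_injective hrn) t _
  · rw [coeff_mul_monomial']
    split_ifs with hle
    · by_contra hne
      obtain ⟨b, hb, -⟩ := coeff_rename_ne_zero _ _ _ (left_ne_zero_of_mul hne)
      apply h
      rw [← tsub_add_cancel_of_le hle, add_comm, ← hb]
      exact restrHead_liftHead_add_liftTail hrn w b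
    · rfl

theorem liftHead_add_liftTail_injective (w : Fin r →₀ ℕ) :
    Function.Injective fun b => liftHead hrn w + liftTail hrn b := fun b b' h => by
  simpa only [restrTail_liftHead_add_liftTail] using congrArg (restrTail hrn) h

/-- The coefficient of `x^w` when `k[x_1,…,x_n]` is viewed as a polynomial ring in
`x_1,…,x_r` over `k[x_{r+1},…,x_n]`. -/
noncomputable def tailCoeff (hrn : r ≤ n) (w : Fin r →₀ ℕ) :
    MvPolynomial (Fin n) k →+ MvPolynomial (Fin (n - r)) k where
  toFun f := AddMonoidAlgebra.ofCoeff (Finsupp.comapDomain _ (AddMonoidAlgebra.coeff f)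
    (liftHead_add_liftTail_injective hrn w).injOn)
  map_zero' := MvPolynomial.ext _ _ fun _ => coeff_zero (R := k) _
  map_add' f g := MvPolynomial.ext _ _ fun _ => coeff_add _ f g

theorem coeff_tailCoeff (w : Fin r →₀ ℕ) (f : MvPolynomial (Fin n) k) (b : Fin (n - r) →₀ ℕ) :
    coeff b (tailCoeff hrn w f) = coeff (liftHead hrn w + liftTail hrn b) f := rfl

theorem tailCoeff_tailIncl_mul_monomial (t : MvPolynomial (Fin (n - r)) k)
    (w w' : Fin r →₀ ℕ) :
    tailCoeff hrn w (tailIncl k r hrn t * monomial (liftHead hrn w') 1) =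
      if w' = w then t else 0 := by
  ext b
  rw [coeff_tailCoeff, coeff_tailIncl_mul_monomial, restrHead_liftHead_add_liftTail,
    restrTail_liftHead_add_liftTail]
  split_ifs <;> simp_all

theorem sum_tailIncl_tailCoeff_mul_monomial (f : MvPolynomial (Fin n) k) :
    ∑ w ∈ f.support.image (restrHead hrn),
      tailIncl k r hrn (tailCoeff hrn w f) * monomial (liftHead hrn w) 1 = f := by
  classical
  ext a
  simp_rw [coeff_sum, coeff_tailIncl_mul_monomial, Finset.sum_ite_eq, Finset.mem_image,
    coeff_tailCoeff, liftHead_restrHead_add_liftTail_restrTail]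
  split_ifs with h
  · rfl
  · exact (MvPolynomial.notMem_support_iff.mp fun ha => h ⟨a, ha, rfl⟩).symm

theorem IsMonomialClosed.tailIncl_tailCoeff_mul_mem {P : Ideal (MvPolynomial (Fin n) k)}
    (hP : IsMonomialClosed P) (w : Fin r →₀ ℕ) {f : MvPolynomial (Fin n) k} (hf : f ∈ P) :
    tailIncl k r hrn (tailCoeff hrn w f) * monomial (liftHead hrn w) 1 ∈ P := by
  refine hP.mem_of_support_subset hf fun a ha => ?_
  rw [MvPolynomial.mem_support_iff, coeff_tailIncl_mul_monomial] at ha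
  rw [MvPolynomial.mem_support_iff]
  split_ifs at ha with h
  · rwa [coeff_tailCoeff, ← h, liftHead_restrHead_add_liftTail_restrTail] at ha
  · exact absurd rfl ha

/-- For a monomial-closed `P`: `P` is generated by monomials in `x_1,…,x_r`. -/
def IsHeadGenerated (P : Ideal (MvPolynomial (Fin n) k)) : Prop :=
  ∀ a, monomial a (1 : k) ∈ P → monomial (liftHead hrn (restrHead hrn a)) (1 : k) ∈ P

theorem IsMonomialClosed.eq_zero_of_tailIncl_mul_mem {P : Ideal (MvPolynomial (Fin n) k)}
    (hP : IsMonomialClosed P) (hPh : IsHeadGenerated hrn P) {w : Fin r →₀ ℕ}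
    (hw : monomial (liftHead hrn w) (1 : k) ∉ P) {t : MvPolynomial (Fin (n - r)) k}
    (ht : tailIncl k r hrn t * monomial (liftHead hrn w) 1 ∈ P) : t = 0 := by
  by_contra hne
  obtain ⟨b, hb⟩ := support_nonempty.mpr hne
  have hcoeff := coeff_tailIncl_mul_monomial hrn t w (liftHead hrn w + liftTail hrn b)
  rw [restrHead_liftHead_add_liftTail, restrTail_liftHead_add_liftTail, if_pos rfl] at hcoeff
  have hmem := hP _ ht _ (MvPolynomial.mem_support_iff.mpr
    (hcoeff ▸ MvPolynomial.mem_support_iff.mp hb))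
  have := hPh _ hmem
  rw [restrHead_liftHead_add_liftTail] at this
  exact hw this

end TailCoeff

section Rank

variable {k : Type*} [Field k] {n r : ℕ} (hrn : r ≤ n) {J₁ J₂ : Ideal (MvPolynomial (Fin n) k)}

noncomputable def gapClass (w : liftHead hrn ⁻¹' monomialGap J₁ J₂) : quotMod J₁ J₂ :=
  Submodule.Quotient.mk ⟨monomial (liftHead hrn w) 1, w.2.1⟩

theorem linearIndependent_gapClass (hJ₁ : IsMonomialClosed J₁) (hJ₁h : IsHeadGenerated hrn J₁) :
    letI := quotModTail r hrn J₁ J₂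
    LinearIndependent (MvPolynomial (Fin (n - r)) k) (gapClass hrn (J₁ := J₁) (J₂ := J₂)) := by
  let _ := quotModTail r hrn J₁ J₂
  refine linearIndependent_iff.mpr fun l hl => ?_
  have hsum : Finsupp.linearCombination _ (gapClass hrn) l = Submodule.Quotient.mk
      (∑ w ∈ l.support, ⟨tailIncl k r hrn (l w) * monomial (liftHead hrn w) 1,
        J₂.mul_mem_left _ w.2.1⟩) := by
    rw [Finsupp.linearCombination_apply, Finsupp.sum, ← Submodule.mkQ_apply, map_sum]
    -- `t` acts on `J₂/J₁` as multiplication by `tailIncl t`, so the sums agree termwise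
    rfl
  rw [hsum, Submodule.Quotient.mk_eq_zero, Submodule.mem_comap, Submodule.subtype_apply,
    Submodule.coe_sum] at hl
  ext1 w
  refine hJ₁.eq_zero_of_tailIncl_mul_mem hrn hJ₁h w.2.2 ?_
  have hcoeff : tailCoeff hrn w (∑ w' ∈ l.support,
      tailIncl k r hrn (l w') * monomial (liftHead hrn w') 1) = l w := by
    simp_rw [map_sum, tailCoeff_tailIncl_mul_monomial, Subtype.coe_inj]
    exact Finsupp.sum_ite_self_eq' l w
  simpa only [hcoeff] using hJ₁.tailIncl_tailCoeff_mul_mem hrn w hl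

theorem span_range_gapClass (hJ₂ : IsMonomialClosed J₂) (hJ₂h : IsHeadGenerated hrn J₂) :
    letI := quotModTail r hrn J₁ J₂
    ⊤ ≤ Submodule.span (MvPolynomial (Fin (n - r)) k)
      (Set.range (gapClass hrn (J₁ := J₁) (J₂ := J₂))) := by
  let _ := quotModTail r hrn J₁ J₂
  have hmon (w) (hw : monomial (liftHead hrn w) (1 : k) ∈ J₂) :
      (Submodule.Quotient.mk ⟨_, hw⟩ : quotMod J₁ J₂) ∈
        Submodule.span (MvPolynomial (Fin (n - r)) k) (Set.range (gapClass hrn)) := by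
    by_cases hw₁ : monomial (liftHead hrn w) (1 : k) ∈ J₁
    · convert Submodule.zero_mem _
      exact (Submodule.Quotient.mk_eq_zero _).mpr hw₁
    · exact Submodule.subset_span ⟨⟨w, hw, hw₁⟩, rfl⟩
  rintro x -
  obtain ⟨⟨f, hf⟩, rfl⟩ := Submodule.mkQ_surjective _ x
  have hW : ∀ w ∈ f.support.image (restrHead hrn), monomial (liftHead hrn w) (1 : k) ∈ J₂ := by
    simp only [Finset.mem_image]
    rintro _ ⟨a, ha, rfl⟩
    exact hJ₂h a (hJ₂ f hf a ha)
  have hf_sum : (⟨f, hf⟩ : J₂) = ∑ w ∈ (f.support.image (restrHead hrn)).attach,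
      ⟨tailIncl k r hrn (tailCoeff hrn w f) * monomial (liftHead hrn w) 1,
        J₂.mul_mem_left _ (hW w w.2)⟩ := by
    apply Subtype.ext
    rw [Submodule.coe_sum, Finset.sum_attach _
      (fun w => tailIncl k r hrn (tailCoeff hrn w f) * monomial (liftHead hrn w) 1),
      sum_tailIncl_tailCoeff_mul_monomial]
  rw [hf_sum, map_sum]
  exact Submodule.sum_mem _ fun w _ =>
    Submodule.smul_mem _ (tailCoeff hrn w f) (hmon w (hW w w.2))

theorem finrank_quotModTail_eq_ncard (hJ₁ : IsMonomialClosed J₁) (hJ₂ : IsMonomialClosed J₂)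
    (hJ₁h : IsHeadGenerated hrn J₁) (hJ₂h : IsHeadGenerated hrn J₂) :
    @finrank (MvPolynomial (Fin (n - r)) k) (quotMod J₁ J₂) _ _ (quotModTail r hrn J₁ J₂) =
      (liftHead hrn ⁻¹' monomialGap J₁ J₂).ncard := by
  let _ := quotModTail r hrn J₁ J₂
  rw [finrank_eq_nat_card_basis (Basis.mk (linearIndependent_gapClass hrn hJ₁ hJ₁h)
    (span_range_gapClass hrn hJ₂ hJ₂h)), Nat.card_coe_set_eq]

end Rank

section Projection

variable {k : Type*} [Field k] {n r : ℕ} (hrn : r ≤ n)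

theorem projDown_inclUp (g : MvPolynomial (Fin r) k) : projDown k n r (inclUp k hrn g) = g := by
  rw [projDown, inclUp, aeval_rename]
  convert aeval_X_left_apply g
  ext1 j
  simp [j.isLt]

theorem inclUp_projDown (f : MvPolynomial (Fin n) k) :
    inclUp k hrn (projDown k n r f) =
      aeval (fun i : Fin n => inclUp k hrn (if h : (i : ℕ) < r then X ⟨i, h⟩ else 0)) f :=
  comp_aeval_apply _ _ f

variable {P : Ideal (MvPolynomial (Fin n) k)}

theorem IsMonomialClosed.mem_piIdeal_iff (hP : IsMonomialClosed P) {g : MvPolynomial (Fin r) k} :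
    g ∈ PiIdeal r P ↔ inclUp k hrn g ∈ P := by
  refine ⟨fun hg => ?_, fun hg => projDown_inclUp hrn g ▸ Ideal.mem_map_of_mem _ hg⟩
  obtain ⟨p, hp, rfl⟩ := (Ideal.mem_map_iff_of_surjective _
    fun g => ⟨inclUp k hrn g, projDown_inclUp hrn g⟩).mp hg
  refine inclUp_projDown hrn p ▸ hP.aeval_mem (fun i => ?_) hp
  split_ifs
  · exact Or.inl (rename_X _ _)
  · exact Or.inr (map_zero _)

theorem IsMonomialClosed.monomial_mem_piIdeal_iff (hP : IsMonomialClosed P) {w : Fin r →₀ ℕ} :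
    monomial w (1 : k) ∈ PiIdeal r P ↔ monomial (liftHead hrn w) (1 : k) ∈ P := by
  rw [hP.mem_piIdeal_iff hrn, inclUp, rename_monomial]
  rfl

theorem IsMonomialClosed.piIdeal (hrn : r ≤ n) (hP : IsMonomialClosed P) :
    IsMonomialClosed (PiIdeal r P) := by
  intro f hf w hw
  rw [hP.monomial_mem_piIdeal_iff hrn]
  refine hP _ ((hP.mem_piIdeal_iff hrn).mp hf) _ ?_
  rw [MvPolynomial.mem_support_iff, inclUp, liftHead,
    coeff_rename_mapDomain _ (Fin.castLE_injective hrn)]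
  exact MvPolynomial.mem_support_iff.mp hw

end Projection

section Saturation

variable {k : Type*} [Field k] {n r : ℕ} {J : Ideal (MvPolynomial (Fin n) k)}

noncomputable def tailProdExp (n r : ℕ) : Fin n →₀ ℕ :=
  ∑ i ∈ Finset.univ.filter (fun i : Fin n => r ≤ (i : ℕ)), Finsupp.single i 1

theorem tailProdExp_apply (i : Fin n) : tailProdExp n r i = if r ≤ (i : ℕ) then 1 else 0 := by
  simp [tailProdExp, Finsupp.finsetSum_apply, Finsupp.single_apply]

theorem tailProd_pow (m : ℕ) : tailProd k n r ^ m = monomial (m • tailProdExp n r) 1 := by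
  rw [← one_pow m, ← monomial_pow, tailProdExp, monomial_sum_one]
  rfl

theorem mem_Phi {f : MvPolynomial (Fin n) k} :
    f ∈ Phi r J ↔ ∃ m : ℕ, f * tailProd k n r ^ m ∈ J := by
  have hmono : Monotone fun m : ℕ =>
      Submodule.colon J ((Ideal.span {tailProd k n r} ^ m : Ideal (MvPolynomial (Fin n) k)) :
        Set (MvPolynomial (Fin n) k)) :=
    monotone_nat_of_le_succ fun m => Submodule.colon_mono le_rfl
      (SetLike.coe_subset_coe.mpr (Ideal.pow_le_pow_right (Nat.le_succ m)))
  rw [Phi, sat, Submodule.mem_iSup_of_directed _ hmono.directed_le]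
  exact exists_congr fun m => by rw [Ideal.span_singleton_pow, Ideal.mem_colon_span_singleton]

theorem le_Phi (J : Ideal (MvPolynomial (Fin n) k)) : J ≤ Phi r J :=
  fun f hf => mem_Phi.mpr ⟨0, by rwa [pow_zero, mul_one]⟩

theorem IsMonomialClosed.Phi (hJ : IsMonomialClosed J) : IsMonomialClosed (Phi r J) := by
  intro f hf a ha
  obtain ⟨m, hm⟩ := mem_Phi.mp hf
  refine mem_Phi.mpr ⟨m, ?_⟩
  rw [tailProd_pow] at hm
  rw [tailProd_pow, monomial_mul, one_mul]
  refine hJ _ hm _ ?_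
  rw [MvPolynomial.mem_support_iff, coeff_mul_monomial, mul_one]
  exact MvPolynomial.mem_support_iff.mp ha

theorem isHeadGenerated_Phi (hrn : r ≤ n) : IsHeadGenerated hrn (Phi r J) := by
  intro a ha
  obtain ⟨m, hm⟩ := mem_Phi.mp ha
  refine mem_Phi.mpr ⟨m + a.degree, ?_⟩
  rw [tailProd_pow, monomial_mul, one_mul] at hm ⊢
  refine monomial_one_mem_of_le (fun i => ?_) hm
  simp only [Finsupp.add_apply, Finsupp.smul_apply, smul_eq_mul, tailProdExp_apply,
    liftHead_apply, restrHead, Finsupp.comapDomain_apply, Fin.castLE_mk, Fin.eta]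
  have := Finsupp.le_degree i a
  split_ifs <;> omega

end Saturation

section Jone

variable {k : Type*} [Field k] {n r : ℕ} (hrn : r ≤ n) {J : Ideal (MvPolynomial (Fin n) k)}

theorem Jone_eq_span (r : ℕ) (J : Ideal (MvPolynomial (Fin n) k)) :
    Jone r J = Ideal.span ((fun d => (monomial d (1 : k) : MvPolynomial (Fin n) k)) ''
      {d | (∀ i : Fin n, r ≤ (i : ℕ) → d i = 0) ∧ monomial d (1 : k) ∈ J}) := by
  rw [Jone]
  congr 1
  ext g
  simp only [Set.mem_image, Set.mem_ofPred_eq, and_assoc, eq_comm (a := g)]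

theorem isMonomialClosed_Jone (r : ℕ) (J : Ideal (MvPolynomial (Fin n) k)) :
    IsMonomialClosed (Jone r J) :=
  Jone_eq_span r J ▸ isMonomialClosed_span_monomial_image _

theorem monomial_mem_Jone_iff {a : Fin n →₀ ℕ} :
    monomial a (1 : k) ∈ Jone r J ↔ monomial (liftHead hrn (restrHead hrn a)) (1 : k) ∈ J := by
  classical
  rw [Jone_eq_span, mem_ideal_span_monomial_image]
  constructor
  · intro h
    obtain ⟨d, ⟨hd, hdJ⟩, hda⟩ := h a (by simp)
    exact monomial_one_mem_of_le (le_liftHead_restrHead hrn hd hda) hdJ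
  · intro h b hb
    rw [Finset.mem_singleton.mp (support_monomial_subset hb)]
    refine ⟨_, ⟨fun i hi => ?_, h⟩, liftHead_restrHead_le hrn a⟩
    rw [liftHead_apply, dif_neg (by omega)]

theorem isHeadGenerated_Jone : IsHeadGenerated hrn (Jone r J) := fun a ha => by
  rwa [monomial_mem_Jone_iff hrn, restrHead_liftHead, ← monomial_mem_Jone_iff hrn]

theorem liftHead_preimage_monomialGap (hJ : IsMonomialClosed J) :
    liftHead hrn ⁻¹' monomialGap (Jone r J) (Phi r J) =
      monomialGap (PiIdeal r J) (PiIdeal r (Phi r J)) := by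
  ext w
  simp only [Set.mem_preimage, monomialGap, Set.mem_ofPred_eq, monomial_mem_Jone_iff hrn,
    restrHead_liftHead, hJ.monomial_mem_piIdeal_iff hrn, hJ.Phi.monomial_mem_piIdeal_iff hrn]

end Jone

end Paper

theorem stmt12_general {k : Type*} [Field k] {n : ℕ}
    (J : Ideal (MvPolynomial (Fin n) k)) (hB : IsBorelType J)
    (r : ℕ) (hrn : r ≤ n) :
    (∃ u : Fin r →₀ ℕ,
      (monomial u (1:k) : MvPolynomial (Fin r) k) ∈
        Submodule.colon (PiIdeal r J)
          (Ideal.span (Set.range (X : Fin r → MvPolynomial (Fin r) k))) ∧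
      (monomial u (1:k) : MvPolynomial (Fin r) k) ∉ PiIdeal r J ∧
      PiIdeal r (Phi r J) =
        PiIdeal r J ⊔ Ideal.span {(monomial u (1:k) : MvPolynomial (Fin r) k)}) ↔
    @Module.finrank (MvPolynomial (Fin (n - r)) k) (quotMod (Jone r J) (Phi r J)) _ _
      (quotModTail r hrn (Jone r J) (Phi r J)) = 1 := by
  obtain ⟨⟨G, hG⟩, -⟩ := hB
  have hJ : IsMonomialClosed J := hG ▸ isMonomialClosed_span_monomial_image G
  rw [finrank_quotModTail_eq_ncard hrn (isMonomialClosed_Jone r J) hJ.Phi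
      (isHeadGenerated_Jone hrn) (isHeadGenerated_Phi hrn),
    liftHead_preimage_monomialGap hrn hJ, Set.ncard_eq_one]
  exact exists_colon_eq_sup_span_iff (hJ.piIdeal hrn) (hJ.Phi.piIdeal hrn)
    (Ideal.map_mono (le_Phi J))

/-- For a Borel-type monomial ideal `J` with `dim(S/J) ≥ n - r`,
with `J₁ = (J ∩ k[x_1,…,x_r])S` and `J₂ = J : (x_{r+1}⋯x_n)^∞`, the following are
equivalent: (a) `Π_r(J₂) = Π_r(J) + (u)` for some monomial
`u ∈ (Π_r(J) : 𝔪(r)) \ Π_r(J)`; (b) `J₂/J₁` has rank `1` over `k[x_{r+1},…,x_n]`. -/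
theorem stmt12 {k : Type*} [Field k] {n : ℕ}
    (J : Ideal (MvPolynomial (Fin n) k)) (hB : IsBorelType J)
    (r : ℕ) (hrn : r ≤ n)
    (hdim : ((n - r : ℕ) : WithBot (WithTop ℕ)) ≤ qdim J) :
    (∃ u : Fin r →₀ ℕ,
      (monomial u (1:k) : MvPolynomial (Fin r) k) ∈
        Submodule.colon (PiIdeal r J)
          (Ideal.span (Set.range (X : Fin r → MvPolynomial (Fin r) k))) ∧
      (monomial u (1:k) : MvPolynomial (Fin r) k) ∉ PiIdeal r J ∧
      PiIdeal r (Phi r J) =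
        PiIdeal r J ⊔ Ideal.span {(monomial u (1:k) : MvPolynomial (Fin r) k)}) ↔
    @Module.finrank (MvPolynomial (Fin (n - r)) k) (quotMod (Jone r J) (Phi r J)) _ _
      (quotModTail r hrn (Jone r J) (Phi r J)) = 1 :=
  stmt12_general J hB r hrn
end
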